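/- Let n ≥ 1, s ∈ ℝ and 0 < q, r ≤ ∞. The Gaussian x ↦ e^{−|x|²} satisfies ‖e^{−|·|²}‖_{K̇^s_{q,r}} < ∞ if and only if either s/n + 1/q > 0, or s/n + 1/q = 0 and r = ∞. -/

import Mathlib

open MeasureTheory Set ENNReal Filter

noncomputable section

abbrev Euc (n : ℕ) : Type := EuclideanSpace ℝ (Fin n)

def annulus (n : ℕ) (j : ℤ) : Set (Euc n) :=
  {x : Euc n | (2 : ℝ) ^ (j - 1) ≤ ‖x‖ ∧ ‖x‖ < (2 : ℝ) ^ j}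

def herzNorm (n : ℕ) (s : ℝ) (q r : ℝ≥0∞) (f : Euc n → ℝ) : ℝ≥0∞ :=
  if r = ⊤ then
    ⨆ j : ℤ, ENNReal.ofReal ((2 : ℝ) ^ ((j : ℝ) * s)) *
      eLpNorm ((annulus n j).indicator f) q volume
  else
    (∑' j : ℤ, (ENNReal.ofReal ((2 : ℝ) ^ ((j : ℝ) * s)) *
      eLpNorm ((annulus n j).indicator f) q volume) ^ r.toReal) ^ (1 / r.toReal)

/-!
On the annulus `A_j` the Gaussian lies between `e^{-4^j}` and `e^{-4^j/4}`, and
`|A_j| = 2^{jn} |A_0|`. Hence the `j`-th Herz term `2^{js} ‖e^{-|·|²} χ_{A_j}‖_q` is comparable,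
above and below, to `2^{jα} e^{-κ 4^j}` with `α = s + n/q` (for two different `κ > 0`).
As `j → +∞` this decays superexponentially for every `α`, while as `j → -∞` it behaves like
`2^{jα}`; so the sequence is bounded iff `α ≥ 0`, and its `r`-th powers are summable iff `α > 0`.
-/

open Real Topology

def gaussProfile (α κ : ℝ) (j : ℤ) : ℝ := 2 ^ ((j : ℝ) * α) * exp (-κ * 4 ^ j)

lemma two_rpow_neg_natCast_mul (α : ℝ) (m : ℕ) :
    (2 : ℝ) ^ (((-m : ℤ) : ℝ) * α) = (2 ^ (-α)) ^ m := by
  rw [← Real.rpow_natCast, ← rpow_mul zero_le_two]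
  push_cast
  ring_nf

section gaussProfile

variable (α κ : ℝ)

lemma gaussProfile_pos (j : ℤ) : 0 < gaussProfile α κ j := by unfold gaussProfile; positivity

lemma gaussProfile_rpow {p : ℝ} (j : ℤ) :
    gaussProfile α κ j ^ p = gaussProfile (α * p) (κ * p) j := by
  unfold gaussProfile
  rw [mul_rpow (by positivity) (by positivity), ← rpow_mul zero_le_two, ← exp_mul]
  ring_nf

lemma gaussProfile_add (β : ℝ) (j : ℤ) :
    gaussProfile (α + β) κ j = 2 ^ ((j : ℝ) * β) * gaussProfile α κ j := by
  unfold gaussProfile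
  rw [mul_add, rpow_add two_pos]
  ring

variable {κ}

lemma gaussProfile_neg_natCast_le (hκ : 0 ≤ κ) (m : ℕ) :
    gaussProfile α κ (-m) ≤ (2 ^ (-α)) ^ m := by
  unfold gaussProfile
  rw [two_rpow_neg_natCast_mul]
  refine mul_le_of_le_one_right (by positivity) (exp_le_one_iff.2 ?_)
  exact mul_nonpos_of_nonpos_of_nonneg (neg_nonpos.2 hκ) (by positivity)

lemma exp_neg_mul_le_gaussProfile_neg_natCast (hκ : 0 ≤ κ) (m : ℕ) :
    exp (-κ) * (2 ^ (-α)) ^ m ≤ gaussProfile α κ (-m) := by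
  unfold gaussProfile
  rw [two_rpow_neg_natCast_mul, mul_comm]
  have h4 : (4 : ℝ) ^ (-m : ℤ) ≤ 1 := zpow_le_one_of_nonpos₀ (by norm_num) (by simp)
  gcongr
  nlinarith

lemma tendsto_gaussProfile_natCast_atTop (hκ : 0 < κ) :
    Tendsto (fun m : ℕ => gaussProfile α κ m) atTop (𝓝 0) := by
  have h4 : Tendsto (fun m : ℕ => (4 : ℝ) ^ m) atTop atTop :=
    tendsto_pow_atTop_atTop_of_one_lt (by norm_num)
  refine ((tendsto_rpow_mul_exp_neg_mul_atTop_nhds_zero (α / 2) κ hκ).comp h4).congr fun m => ?_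
  have h2 : ((4 : ℝ) ^ m) ^ (α / 2) = 2 ^ ((m : ℝ) * α) := by
    rw [show (4 : ℝ) = 2 ^ (2 : ℝ) by norm_num, ← Real.rpow_natCast, ← Real.rpow_mul zero_le_two,
      ← Real.rpow_mul zero_le_two]
    ring_nf
  simp only [Function.comp_apply, gaussProfile, zpow_natCast, Int.cast_natCast, h2]

variable {α}

lemma bddAbove_range_gaussProfile_iff (hκ : 0 < κ) :
    BddAbove (range (gaussProfile α κ)) ↔ 0 ≤ α := by
  constructor
  · intro hbdd
    by_contra! hα
    have hgrow : Tendsto (fun m : ℕ => exp (-κ) * (2 ^ (-α)) ^ m) atTop atTop :=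
      (tendsto_pow_atTop_atTop_of_one_lt
        (Real.one_lt_rpow one_lt_two (by linarith))).const_mul_atTop (exp_pos _)
    refine not_bddAbove_of_tendsto_atTop hgrow ?_
    obtain ⟨M, hM⟩ := hbdd
    exact ⟨M, forall_mem_range.2 fun m =>
      (exp_neg_mul_le_gaussProfile_neg_natCast α hκ.le m).trans (hM (mem_range_self _))⟩
  · intro hα
    obtain ⟨M, hM⟩ := (tendsto_gaussProfile_natCast_atTop α hκ).bddAbove_range
    refine ⟨max M 1, forall_mem_range.2 fun j => ?_⟩
    obtain ⟨m, rfl | rfl⟩ := j.eq_nat_or_neg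
    · exact le_max_of_le_left (hM (mem_range_self m))
    · refine le_max_of_le_right ((gaussProfile_neg_natCast_le α hκ.le m).trans ?_)
      exact pow_le_one₀ (by positivity) (rpow_le_one_of_one_le_of_nonpos one_le_two (by linarith))

lemma summable_gaussProfile_iff (hκ : 0 < κ) : Summable (gaussProfile α κ) ↔ 0 < α := by
  constructor
  · intro hsum
    by_contra! hα
    have hzero : Tendsto (fun m : ℕ => gaussProfile α κ (-m)) atTop (𝓝 0) :=
      (hsum.comp_injective (neg_injective.comp Nat.cast_injective)).tendsto_atTop_zero
    refine (exp_pos (-κ)).not_ge (ge_of_tendsto hzero (Eventually.of_forall fun m => ?_))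
    refine le_trans ?_ (exp_neg_mul_le_gaussProfile_neg_natCast α hκ.le m)
    exact le_mul_of_one_le_right (exp_pos _).le
      (one_le_pow₀ (Real.one_le_rpow one_le_two (by linarith)))
  · intro hα
    apply Summable.of_nat_of_neg
    · refine Summable.of_norm_bounded_eventually_nat summable_geometric_two
        (((tendsto_gaussProfile_natCast_atTop (α + 1) hκ).eventually_le_const one_pos).mono
          fun m hm => ?_)
      rw [gaussProfile_add, Int.cast_natCast, mul_one, Real.rpow_natCast] at hm
      rw [Real.norm_of_nonneg (gaussProfile_pos α κ m).le, one_div_pow,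
        le_div_iff₀' (by positivity)]
      simpa using hm
    · exact Summable.of_nonneg_of_le (fun m => (gaussProfile_pos α κ _).le)
        (gaussProfile_neg_natCast_le α hκ.le) (summable_geometric_of_lt_one (by positivity)
          (rpow_lt_one_of_one_lt_of_neg one_lt_two (by linarith)))

end gaussProfile

def IsGaussComparable (α : ℝ) (a : ℤ → ℝ≥0∞) : Prop :=
  ∃ K > 0, ∃ κ₁ > 0, ∃ κ₂ > 0, ∀ j, ENNReal.ofReal (K * gaussProfile α κ₁ j) ≤ a j ∧
    a j ≤ ENNReal.ofReal (K * gaussProfile α κ₂ j)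

namespace IsGaussComparable

variable {α : ℝ} {a : ℤ → ℝ≥0∞}

lemma rpow (h : IsGaussComparable α a) {p : ℝ} (hp : 0 < p) :
    IsGaussComparable (α * p) (fun j => a j ^ p) := by
  obtain ⟨K, hK, κ₁, hκ₁, κ₂, hκ₂, hbound⟩ := h
  have hpow : ∀ κ j, ENNReal.ofReal (K * gaussProfile α κ j) ^ p =
      ENNReal.ofReal (K ^ p * gaussProfile (α * p) (κ * p) j) := fun κ j => by
    rw [ENNReal.ofReal_rpow_of_nonneg (by positivity [(gaussProfile_pos α κ j).le]) hp.le,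
      Real.mul_rpow hK.le (gaussProfile_pos α κ j).le, gaussProfile_rpow]
  refine ⟨K ^ p, by positivity, κ₁ * p, by positivity, κ₂ * p, by positivity, fun j => ?_⟩
  rw [← hpow, ← hpow]
  exact ⟨ENNReal.rpow_le_rpow (hbound j).1 hp.le, ENNReal.rpow_le_rpow (hbound j).2 hp.le⟩

lemma iSup_lt_top_iff (h : IsGaussComparable α a) : (⨆ j, a j) < ⊤ ↔ 0 ≤ α := by
  obtain ⟨K, hK, κ₁, hκ₁, κ₂, hκ₂, hbound⟩ := h
  constructor
  · intro hfin
    refine (bddAbove_range_gaussProfile_iff hκ₁).1 ⟨(⨆ j, a j).toReal / K, ?_⟩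
    rintro _ ⟨j, rfl⟩
    rw [le_div_iff₀' hK, ← ENNReal.ofReal_le_iff_le_toReal hfin.ne]
    exact (hbound j).1.trans (le_iSup a j)
  · intro hα
    obtain ⟨M, hM⟩ := (bddAbove_range_gaussProfile_iff hκ₂).2 hα
    refine lt_of_le_of_lt (iSup_le fun j => (hbound j).2.trans ?_) (ofReal_lt_top (r := K * M))
    exact ENNReal.ofReal_le_ofReal (mul_le_mul_of_nonneg_left (hM (mem_range_self j)) hK.le)

lemma tsum_lt_top_iff (h : IsGaussComparable α a) : ∑' j, a j < ⊤ ↔ 0 < α := by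
  obtain ⟨K, hK, κ₁, hκ₁, κ₂, hκ₂, hbound⟩ := h
  constructor
  · intro hfin
    rw [← summable_gaussProfile_iff hκ₁, ← summable_mul_left_iff hK.ne']
    refine (ENNReal.summable_toReal hfin.ne).of_nonneg_of_le
      (fun j => by positivity [(gaussProfile_pos α κ₁ j).le]) fun j => ?_
    rw [← ENNReal.ofReal_le_iff_le_toReal (ne_top_of_le_ne_top hfin.ne (ENNReal.le_tsum j))]
    exact (hbound j).1
  · intro hα
    have hsum := ((summable_gaussProfile_iff hκ₂).2 hα).mul_left K
    refine lt_of_le_of_lt (ENNReal.tsum_le_tsum fun j => (hbound j).2) ?_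
    rw [← ENNReal.ofReal_tsum_of_nonneg (fun j => by positivity [(gaussProfile_pos α κ₂ j).le])
      hsum]
    exact ofReal_lt_top

end IsGaussComparable

open scoped Pointwise

section annulus

variable {n : ℕ}

lemma measurableSet_annulus (j : ℤ) : MeasurableSet (annulus n j) :=
  measurable_norm measurableSet_Ico

lemma annulus_eq_smul (j : ℤ) : annulus n j = ((2 : ℝ) ^ j) • annulus n 0 := by
  ext x
  have h2j : (0 : ℝ) < 2 ^ j := zpow_pos two_pos j
  rw [mem_smul_set_iff_inv_smul_mem₀ h2j.ne']
  simp only [annulus, mem_ofPred_eq, norm_smul, norm_inv, norm_zpow, Real.norm_two, zero_sub,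
    zpow_zero, zpow_neg_one]
  rw [zpow_sub_one₀ two_ne_zero, ← div_eq_inv_mul, le_div_iff₀ h2j, div_lt_iff₀ h2j, one_mul,
    mul_comm]

lemma volume_annulus (j : ℤ) :
    volume (annulus n j) = ENNReal.ofReal (2 ^ ((j : ℝ) * n)) * volume (annulus n 0) := by
  rw [annulus_eq_smul j, Measure.addHaar_smul, finrank_euclideanSpace_fin,
    abs_of_nonneg (by positivity), ← Real.rpow_intCast, ← Real.rpow_natCast,
    ← Real.rpow_mul zero_le_two]

lemma volume_annulus_zero_lt_top : volume (annulus n 0) < ⊤ :=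
  measure_lt_top_of_subset (fun x hx => mem_closedBall_zero_iff.2 (by simpa using hx.2.le))
    (measure_closedBall_lt_top (x := (0 : Euc n)) (r := 1)).ne

lemma volume_annulus_zero_pos (hn : 1 ≤ n) : 0 < volume (annulus n 0) := by
  have : Nontrivial (Euc n) := by
    have : Nonempty (Fin n) := ⟨⟨0, hn⟩⟩
    infer_instance
  have hopen : IsOpen {x : Euc n | (2 : ℝ) ^ ((0 : ℤ) - 1) < ‖x‖ ∧ ‖x‖ < (2 : ℝ) ^ (0 : ℤ)} :=
    (isOpen_lt continuous_const continuous_norm).inter (isOpen_lt continuous_norm continuous_const)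
  obtain ⟨x, hx⟩ := exists_norm_eq (Euc n) (show (0 : ℝ) ≤ 3 / 4 by norm_num)
  exact (hopen.measure_pos volume ⟨x, by norm_num [hx]⟩).trans_le
    (measure_mono fun y hy => ⟨hy.1.le, hy.2⟩)

lemma sq_norm_bounds_of_mem_annulus {x : Euc n} {j : ℤ} (hx : x ∈ annulus n j) :
    4 ^ j / 4 ≤ ‖x‖ ^ 2 ∧ ‖x‖ ^ 2 ≤ 4 ^ j := by
  have hsq : ∀ k : ℤ, ((2 : ℝ) ^ k) ^ 2 = 4 ^ k := fun k => by
    rw [← zpow_natCast, ← zpow_mul, mul_comm, zpow_mul]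
    norm_num
  obtain ⟨hlo, hhi⟩ := hx
  constructor
  · calc (4 : ℝ) ^ j / 4 = ((2 : ℝ) ^ (j - 1)) ^ 2 := by
          rw [hsq, zpow_sub_one₀ (by norm_num), div_eq_mul_inv]
      _ ≤ ‖x‖ ^ 2 := by gcongr
  · rw [← hsq]
    gcongr

end annulus

lemma eLpNorm_indicator_mono {X E F : Type*} [MeasurableSpace X] [NormedAddCommGroup E]
    [NormedAddCommGroup F] {μ : Measure X} {p : ℝ≥0∞} {s : Set X} {f : X → E} {g : X → F}
    (h : ∀ x ∈ s, ‖f x‖ ≤ ‖g x‖) : eLpNorm (s.indicator f) p μ ≤ eLpNorm (s.indicator g) p μ :=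
  eLpNorm_mono fun x => by by_cases hx : x ∈ s <;> simp [hx, h]

section herz

variable {n : ℕ} {q : ℝ≥0∞}

lemma eLpNorm_indicator_annulus_const (hn : 1 ≤ n) (hq : q ≠ 0) {c : ℝ} (hc : 0 ≤ c) (j : ℤ) :
    eLpNorm ((annulus n j).indicator fun _ => c) q volume =
      ENNReal.ofReal (c * 2 ^ ((j : ℝ) * (n * (q⁻¹).toReal))) *
        volume (annulus n 0) ^ (q⁻¹).toReal := by
  have hvol : volume (annulus n j) ≠ 0 := by
    rw [volume_annulus]
    exact mul_ne_zero (ENNReal.ofReal_pos.2 (by positivity)).ne'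
      (volume_annulus_zero_pos hn).ne'
  rw [eLpNorm_indicator_const' (measurableSet_annulus j) hvol hq, volume_annulus,
    ENNReal.mul_rpow_of_nonneg _ _ (by positivity), ENNReal.ofReal_rpow_of_nonneg (by positivity)
      (by positivity), ← Real.rpow_mul zero_le_two, one_div, ← ENNReal.toReal_inv,
    Real.enorm_eq_ofReal hc, ← mul_assoc, ← ENNReal.ofReal_mul hc, mul_assoc]

lemma isGaussComparable_herzTerm (hn : 1 ≤ n) (s : ℝ) (hq : q ≠ 0) :
    IsGaussComparable (s + n * (q⁻¹).toReal) fun j => ENNReal.ofReal (2 ^ ((j : ℝ) * s)) *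
      eLpNorm ((annulus n j).indicator fun x => Real.exp (-‖x‖ ^ 2)) q volume := by
  have hV0 : volume (annulus n 0) ^ (q⁻¹).toReal ≠ 0 :=
    (ENNReal.rpow_pos (volume_annulus_zero_pos hn) volume_annulus_zero_lt_top.ne).ne'
  have hVtop : volume (annulus n 0) ^ (q⁻¹).toReal ≠ ⊤ :=
    ENNReal.rpow_ne_top_of_nonneg ENNReal.toReal_nonneg volume_annulus_zero_lt_top.ne
  obtain ⟨K, hK, hVK⟩ : ∃ K : ℝ, 0 < K ∧ volume (annulus n 0) ^ (q⁻¹).toReal = ENNReal.ofReal K :=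
    ⟨_, ENNReal.toReal_pos hV0 hVtop, (ENNReal.ofReal_toReal hVtop).symm⟩
  have hconst : ∀ (κ : ℝ) (j : ℤ), ENNReal.ofReal (2 ^ ((j : ℝ) * s)) *
      eLpNorm ((annulus n j).indicator fun _ => Real.exp (-κ * 4 ^ j)) q volume =
        ENNReal.ofReal (K * gaussProfile (s + n * (q⁻¹).toReal) κ j) := fun κ j => by
    rw [eLpNorm_indicator_annulus_const hn hq (Real.exp_pos _).le, hVK,
      ← ENNReal.ofReal_mul (by positivity), ← ENNReal.ofReal_mul (by positivity), gaussProfile,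
      mul_add, Real.rpow_add two_pos]
    ring_nf
  refine ⟨K, hK, 1, one_pos, 1 / 4, by norm_num, fun j => ⟨?_, ?_⟩⟩ <;> rw [← hconst] <;>
    refine mul_le_mul_right (eLpNorm_indicator_mono fun x hx => ?_) _ <;>
    simp only [Real.norm_eq_abs, abs_of_pos (Real.exp_pos _), Real.exp_le_exp] <;>
    linarith [sq_norm_bounds_of_mem_annulus hx]

end herz

/-- The Gaussian `x ↦ e^{-|x|²}` belongs to `K̇^s_{q,r}(ℝⁿ)` if and only if
`s/n + 1/q > 0`, or `s/n + 1/q = 0` and `r = ∞`. -/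
theorem gaussian_mem_herz_iff
    (n : ℕ) (hn : 1 ≤ n) (s : ℝ) (q r : ℝ≥0∞) (hq : 0 < q) (hr : 0 < r) :
    herzNorm n s q r (fun x => Real.exp (-‖x‖ ^ 2)) < ⊤ ↔
      (0 < s / (n : ℝ) + (q⁻¹).toReal ∨
        (s / (n : ℝ) + (q⁻¹).toReal = 0 ∧ r = ⊤)) := by
  have hn' : (0 : ℝ) < n := by exact_mod_cast hn
  have hdiv : s / n + (q⁻¹).toReal = (s + n * (q⁻¹).toReal) / n := by field_simp
  have hterm := isGaussComparable_herzTerm hn s hq.ne'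
  rw [hdiv, div_pos_iff_of_pos_right hn', _root_.div_eq_zero_iff, or_iff_left hn'.ne', herzNorm]
  split_ifs with hr_top
  · rw [hterm.iSup_lt_top_iff, le_iff_lt_or_eq, eq_comm]
    simp [hr_top]
  · have hp : 0 < r.toReal := ENNReal.toReal_pos hr.ne' hr_top
    rw [ENNReal.rpow_lt_top_iff_of_pos (by positivity), (hterm.rpow hp).tsum_lt_top_iff,
      mul_pos_iff_of_pos_right hp]
    simp [hr_top]
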